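/- Let S and A be finite nonempty sets, Q : S × A → ℝ, and for each s ∈ S set Δ(s) = max_{a∈A} Q(s,a) - min_{a∈A} Q(s,a). Let b : S → ℝ be a probability vector, let q ∈ S satisfy b(q) > 1/2, and let a ∈ A be an action that is optimal at q, i.e., Q(q,a) = max_{a'∈A} Q(q,a'). Then ∑_{s∈S} h(b(s))·Δ(s) ≥ 2·∑_{s∈S} b(s)·(max_{a'∈A} Q(s,a') - Q(s,a)), where h is the binary entropy function. -/

import Mathlib

/-!
At the dominant state `q` the action `a` is optimal, so its term on the left vanishes while its
term on the right is nonnegative. Every other state has mass `b s ≤ 1 - b q < 1/2`, and on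
`[0, 1/2]` the binary entropy lies above its chord `2 p` (concavity, `h 0 = 0`, `h (1/2) = 1`).
Since the regret `max Q(s, ·) - Q(s, a)` is at most the gap `Δ s`, the inequality holds termwise.
-/

open Finset

/-- Binary entropy function with base-2 logarithm.
    `Real.logb 2 0 = 0`, so the convention `0 · log₂ 0 = 0` holds. -/
noncomputable def binEnt (p : ℝ) : ℝ :=
  -(p * Real.logb 2 p) - (1 - p) * Real.logb 2 (1 - p)

lemma binEnt_eq_binEntropy_div_log_two (p : ℝ) : binEnt p = Real.binEntropy p / Real.log 2 := by
  simp only [binEnt, Real.binEntropy, Real.logb, Real.log_inv]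
  ring

lemma binEnt_nonneg {p : ℝ} (h0 : 0 ≤ p) (h1 : p ≤ 1) : 0 ≤ binEnt p := by
  rw [binEnt_eq_binEntropy_div_log_two]
  exact div_nonneg (Real.binEntropy_nonneg h0 h1) (Real.log_nonneg one_le_two)

lemma two_mul_le_binEnt {p : ℝ} (h0 : 0 ≤ p) (h1 : p ≤ 1 / 2) : 2 * p ≤ binEnt p := by
  -- `p = (2 p) • 2⁻¹ + (1 - 2 p) • 0`
  have hchord := Real.strictConcave_binEntropy.concaveOn.2
    (⟨by norm_num, by norm_num⟩ : (2⁻¹ : ℝ) ∈ Set.Icc 0 1) (⟨le_rfl, zero_le_one⟩ : (0 : ℝ) ∈ Set.Icc 0 1)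
    (by linarith : 0 ≤ 2 * p) (by linarith : 0 ≤ 1 - 2 * p) (by ring)
  simp only [smul_eq_mul, Real.binEntropy_two_inv, Real.binEntropy_zero, mul_zero, add_zero,
    show 2 * p * 2⁻¹ = p by ring] at hchord
  rw [binEnt_eq_binEntropy_div_log_two, le_div_iff₀ (Real.log_pos one_lt_two)]
  exact hchord

section ProbabilityVector

variable {ι : Type*} [Fintype ι] {b : ι → ℝ}

lemma le_one_of_sum_eq_one (hb0 : ∀ i, 0 ≤ b i) (hb1 : ∑ i, b i = 1) (i : ι) : b i ≤ 1 :=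
  hb1 ▸ single_le_sum (fun j _ => hb0 j) (mem_univ i)

lemma le_one_sub_of_sum_eq_one [DecidableEq ι] (hb0 : ∀ i, 0 ≤ b i) (hb1 : ∑ i, b i = 1)
    {i j : ι} (hij : i ≠ j) : b i ≤ 1 - b j := by
  have hpair : b i + b j ≤ ∑ k, b k := by
    rw [← sum_pair hij]
    exact sum_le_sum_of_subset_of_nonneg (subset_univ _) fun k _ _ => hb0 k
  linarith

end ProbabilityVector

lemma two_mul_mul_le_binEnt_mul {p r Δ : ℝ} (hp0 : 0 ≤ p) (hp : p ≤ 1 / 2) (hr0 : 0 ≤ r)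
    (hrΔ : r ≤ Δ) : 2 * (p * r) ≤ binEnt p * Δ :=
  calc 2 * (p * r) = 2 * p * r := by ring
    _ ≤ binEnt p * Δ := mul_le_mul (two_mul_le_binEnt hp0 hp) hrΔ hr0 (binEnt_nonneg hp0 (by linarith))

theorem weighted_entropy_bound_dominant_state_general
    {S A : Type*} [Fintype S] [Fintype A] [Nonempty A]
    (Q : S × A → ℝ)
    (Δ : S → ℝ)
    (hΔ : ∀ s : S, Δ s = (univ.sup' univ_nonempty fun a => Q (s, a)) -
                        (univ.inf' univ_nonempty fun a => Q (s, a)))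
    (b : S → ℝ) (hb0 : ∀ s, 0 ≤ b s) (hb1 : ∑ s, b s = 1)
    (q : S) (hq : 1 / 2 < b q)
    (a : A) (ha : Q (q, a) = univ.sup' univ_nonempty fun a' => Q (q, a')) :
    2 * ∑ s, b s * ((univ.sup' univ_nonempty fun a' => Q (s, a')) - Q (s, a))
      ≤ ∑ s, binEnt (b s) * Δ s := by
  classical
  rw [mul_sum]
  refine sum_le_sum fun s _ => ?_
  set regret := (univ.sup' univ_nonempty fun a' => Q (s, a')) - Q (s, a)
  have hregret_nonneg : 0 ≤ regret := sub_nonneg.2 (le_sup' (fun a' => Q (s, a')) (mem_univ a))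
  have hregret_le : regret ≤ Δ s :=
    hΔ s ▸ sub_le_sub_left (inf'_le (fun a' => Q (s, a')) (mem_univ a)) _
  rcases eq_or_ne s q with rfl | hsq
  · rw [show regret = 0 from sub_eq_zero.2 ha.symm, mul_zero, mul_zero]
    exact mul_nonneg (binEnt_nonneg (hb0 s) (le_one_of_sum_eq_one hb0 hb1 s))
      (hregret_nonneg.trans hregret_le)
  · exact two_mul_mul_le_binEnt_mul (hb0 s)
      (by linarith [le_one_sub_of_sum_eq_one hb0 hb1 hsq]) hregret_nonneg hregret_le

theorem weighted_entropy_bound_dominant_state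
    {S A : Type*} [Fintype S] [Fintype A] [Nonempty S] [Nonempty A]
    (Q : S × A → ℝ)
    (Δ : S → ℝ)
    (hΔ : ∀ s : S, Δ s = (univ.sup' univ_nonempty fun a => Q (s, a)) -
                        (univ.inf' univ_nonempty fun a => Q (s, a)))
    (b : S → ℝ) (hb0 : ∀ s, 0 ≤ b s) (hb1 : ∑ s, b s = 1)
    (q : S) (hq : 1 / 2 < b q)
    (a : A) (ha : Q (q, a) = univ.sup' univ_nonempty fun a' => Q (q, a')) :
    2 * ∑ s, b s * ((univ.sup' univ_nonempty fun a' => Q (s, a')) - Q (s, a))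
      ≤ ∑ s, binEnt (b s) * Δ s :=
  weighted_entropy_bound_dominant_state_general Q Δ hΔ b hb0 hb1 q hq a ha
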